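/- Let A : [0,∞)^n → [0,∞) be an aggregation function such that A* is finite and strictly directionally convex. Then A_*(x) = ∇·x for all x ∈ [0,∞)^n, where ∇_i = lim_{t→0⁺} A(t·e_i)/t and e_i is the i-th standard unit vector. -/

import Mathlib

/-!
Everything rests on the companion statement `A = A*`. Strict directional convexity of `F = A*`
makes `F` strictly superadditive and convex along every nonnegative ray (midpoint convexity
plus monotonicity), so the slopes `F (t eᵢ) / t` decrease to `∇ᵢ` as `t → 0⁺` and
`∇ · y ≤ F y`, strictly for `y ≠ 0`. If `A y < F y`, all packings `∑ cⱼ ≤ y` stay below one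
bound `< F y`: if all pieces are small, `∑ A cⱼ ≤ (∇ + ε) · y`; if one piece nearly exhausts
`y`, `∑ A cⱼ ≤ A y + F (η • 1)`; otherwise some piece `c` lies in a box away from `0` and `y`,
where `c ↦ F c + F (y - c)` is dominated by its values at finitely many vertices, each below
`F y` by strict superadditivity. This contradicts `F y = sup`. Once `A = F`, every covering
has `∑ A dⱼ ≥ ∇ · x`, and cutting each coordinate of `x` into `N` equal pieces gives coverings
whose sums approach `∇ · x`.
-/

open scoped NNReal

namespace AggregationFunction

open Finset Filter Topology

section OneDimensional

variable {f : ℝ≥0 → ℝ}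

theorem dyadic_chord_le (hmid : ∀ u v, 2 * f ((u + v) / 2) ≤ f u + f v) (b : ℝ≥0) (m : ℕ) :
    ∀ k : ℕ, k ≤ 2 ^ m → (2 ^ m : ℝ) * f (k * b / 2 ^ m) ≤ (2 ^ m - k) * f 0 + k * f b := by
  induction m with
  | zero => intro k hk; interval_cases k <;> simp
  | succ m ih =>
    intro k hk
    obtain ⟨j, rfl | rfl⟩ := Nat.even_or_odd' k
    · have hpt : ((2 * j : ℕ) : ℝ≥0) * b / 2 ^ (m + 1) = j * b / 2 ^ m := by
        push_cast; field_simp; ring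
      rw [hpt]
      have := ih j (by rw [pow_succ] at hk; omega)
      push_cast
      linear_combination 2 * this
    · have hpt : ((2 * j + 1 : ℕ) : ℝ≥0) * b / 2 ^ (m + 1) =
          (j * b / 2 ^ m + ((j + 1 : ℕ) : ℝ≥0) * b / 2 ^ m) / 2 := by
        push_cast; field_simp; ring
      rw [hpt]
      have h1 := ih j (by rw [pow_succ] at hk; omega)
      have h2 := ih (j + 1) (by rw [pow_succ] at hk; omega)
      have h3 := hmid (j * b / 2 ^ m) (((j + 1 : ℕ) : ℝ≥0) * b / 2 ^ m)
      push_cast at h2 h3 ⊢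
      linear_combination (2 ^ m : ℝ) * h3 + h1 + h2

theorem chord_le_of_monotone_of_midpoint (hf : Monotone f)
    (hmid : ∀ u v, 2 * f ((u + v) / 2) ≤ f u + f v) {s b : ℝ≥0} (hsb : s ≤ b) :
    (b : ℝ) * f s ≤ (b - s) * f 0 + s * f b := by
  rcases eq_zero_or_pos b with rfl | hb
  · obtain rfl := le_antisymm hsb zero_le
    simp
  have hb' : (0 : ℝ) < b := hb
  have hf0b : f 0 ≤ f b := hf zero_le
  have hbound : ∀ m : ℕ,
      (b : ℝ) * f s ≤ (b - s) * f 0 + s * f b + b * (f b - f 0) * (1 / 2) ^ m := by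
    intro m
    set r : ℝ := 2 ^ m with hr_def
    have hr : 0 < r := by positivity
    set k := ⌈(s : ℝ) * r / b⌉₊
    have hks : (s : ℝ) * r / b ≤ k := Nat.le_ceil _
    have hk1 : (k : ℝ) < s * r / b + 1 := Nat.ceil_lt_add_one (by positivity)
    have hk : k ≤ 2 ^ m := by
      refine Nat.ceil_le.mpr ?_
      rw [div_le_iff₀ hb']
      push_cast
      nlinarith [NNReal.coe_le_coe.mpr hsb]
    have hsK : s ≤ k * b / 2 ^ m := by
      rw [← NNReal.coe_le_coe]
      push_cast
      rw [le_div_iff₀ hr]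
      rwa [div_le_iff₀ hb'] at hks
    have hdy := dyadic_chord_le hmid b m k hk
    have hκ : (b : ℝ) * (k / r) ≤ s + b * (1 / 2) ^ m := by
      have hbk : (b : ℝ) * k ≤ s * r + b := by
        have := mul_lt_mul_of_pos_left hk1 hb'
        rw [mul_add, mul_div_cancel₀ _ hb'.ne'] at this
        linarith
      calc (b : ℝ) * (k / r) = b * k / r := by ring
        _ ≤ (s * r + b) / r := by gcongr
        _ = s + b * (1 / 2) ^ m := by rw [one_div_pow, hr_def]; field_simp
    have hK : f (k * b / 2 ^ m) ≤ f 0 + k / r * (f b - f 0) := by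
      refine le_of_mul_le_mul_left ?_ hr
      rw [mul_add, ← mul_assoc, mul_div_cancel₀ _ hr.ne']
      linarith
    calc (b : ℝ) * f s ≤ b * f (k * b / 2 ^ m) := mul_le_mul_of_nonneg_left (hf hsK) hb'.le
      _ ≤ b * (f 0 + k / r * (f b - f 0)) := mul_le_mul_of_nonneg_left hK hb'.le
      _ = b * f 0 + b * (k / r) * (f b - f 0) := by ring
      _ ≤ b * f 0 + (s + b * (1 / 2) ^ m) * (f b - f 0) := by gcongr
      _ = (b - s) * f 0 + s * f b + b * (f b - f 0) * (1 / 2) ^ m := by ring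
  have hlim := ((tendsto_pow_atTop_nhds_zero_of_lt_one (by norm_num)
    (by norm_num : (1 / 2 : ℝ) < 1)).const_mul ((b : ℝ) * (f b - f 0))).const_add
    (((b : ℝ) - s) * f 0 + s * f b)
  simpa using ge_of_tendsto' hlim hbound

end OneDimensional

theorem exists_pos_of_eventually_nhds_zero {p : ℝ≥0 → Prop} (h : ∀ᶠ δ in 𝓝 0, p δ) :
    ∃ δ, 0 < δ ∧ p δ :=
  ((h.filter_mono nhdsWithin_le_nhds).and (self_mem_nhdsWithin (s := Set.Ioi 0))).exists.imp
    fun _ h => ⟨h.2, h.1⟩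

def boxVertices {ι β : Type*} [Fintype ι] [DecidableEq ι] [DecidableEq β] (lo hi : ι → β) :
    Finset (ι → β) :=
  Fintype.piFinset fun l => {lo l, hi l}

theorem exists_mem_boxVertices_ge {ι β α : Type*} [Fintype ι] [DecidableEq ι] [Preorder β]
    [DecidableEq β] [LinearOrder α] {G : (ι → β) → α} {lo hi : ι → β}
    (hG : ∀ c, lo ≤ c → c ≤ hi → ∀ a,
      G c ≤ max (G (Function.update c a (lo a))) (G (Function.update c a (hi a))))
    {c : ι → β} (hlo : lo ≤ c) (hhi : c ≤ hi) : ∃ v ∈ boxVertices lo hi, G c ≤ G v := by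
  suffices ∀ s : Finset ι, ∀ c, lo ≤ c → c ≤ hi → (∀ l ∉ s, c l ∈ ({lo l, hi l} : Finset β)) →
      ∃ v ∈ boxVertices lo hi, G c ≤ G v from
    this univ c hlo hhi (by simp)
  intro s
  induction s using Finset.induction_on with
  | empty =>
    exact fun c _ _ hc => ⟨c, Fintype.mem_piFinset.mpr fun l => hc l (notMem_empty l), le_rfl⟩
  | insert a s ha ih =>
    intro c hlo hhi hc
    have hupdate : ∀ t ∈ ({lo a, hi a} : Finset β),
        ∃ v ∈ boxVertices lo hi, G (Function.update c a t) ≤ G v := by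
      intro t ht
      have hat : lo a ≤ t ∧ t ≤ hi a := by
        rcases mem_insert.mp ht with rfl | ht
        · exact ⟨le_rfl, (hlo a).trans (hhi a)⟩
        · rw [mem_singleton.mp ht]; exact ⟨(hlo a).trans (hhi a), le_rfl⟩
      refine ih _ (le_update_iff.mpr ⟨hat.1, fun l _ => hlo l⟩)
        (update_le_iff.mpr ⟨hat.2, fun l _ => hhi l⟩) fun l hl => ?_
      rcases eq_or_ne l a with rfl | hla
      · simpa using ht
      · rw [Function.update_of_ne hla]
        exact hc l (by simp [hla, hl])
    rcases le_max_iff.mp (hG c hlo hhi a) with h | h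
    · obtain ⟨v, hv, hcv⟩ := hupdate (lo a) (by simp)
      exact ⟨v, hv, h.trans hcv⟩
    · obtain ⟨v, hv, hcv⟩ := hupdate (hi a) (by simp)
      exact ⟨v, hv, h.trans hcv⟩

variable {ι : Type*}

theorem update_eq_add_smul_single [DecidableEq ι] (c : ι → ℝ≥0) (a : ι) (t : ℝ≥0) :
    Function.update c a t = Function.update c a 0 + t • Pi.single a 1 := by
  ext l
  rcases eq_or_ne l a with rfl | h <;> simp [*]

theorem smul_single_one [DecidableEq ι] (a : ι) (t : ℝ≥0) :
    t • (Pi.single a 1 : ι → ℝ≥0) = Pi.single a t := by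
  rw [← Pi.single_smul, smul_eq_mul, mul_one]

def StrictDirectionallyConvex (F : (ι → ℝ≥0) → ℝ≥0) : Prop :=
  ∀ u v x y : ι → ℝ≥0, u < x → u < y → x < v → y < v → u + v = x + y →
    F x + F y < F u + F v

namespace StrictDirectionallyConvex

variable {F : (ι → ℝ≥0) → ℝ≥0}

theorem map_add_lt (hF : StrictDirectionallyConvex F) (hF0 : F 0 = 0) {u v : ι → ℝ≥0}
    (hu : u ≠ 0) (hv : v ≠ 0) : F u + F v < F (u + v) := by
  have hu' := pos_iff_ne_zero.mpr hu
  have hv' := pos_iff_ne_zero.mpr hv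
  simpa [hF0] using hF 0 (u + v) u v hu' hv' (lt_add_of_pos_right u hv')
    (lt_add_of_pos_left v hu') (zero_add _)

theorem le_map_add (hF : StrictDirectionallyConvex F) (hF0 : F 0 = 0) (u v : ι → ℝ≥0) :
    F u + F v ≤ F (u + v) := by
  rcases eq_or_ne u 0 with rfl | hu
  · simp [hF0]
  rcases eq_or_ne v 0 with rfl | hv
  · simp [hF0]
  exact (hF.map_add_lt hF0 hu hv).le

theorem monotone (hF : StrictDirectionallyConvex F) (hF0 : F 0 = 0) : Monotone F :=
  fun x y hxy => calc
    F x ≤ F x + F (y - x) := le_self_add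
    _ ≤ F (x + (y - x)) := hF.le_map_add hF0 _ _
    _ = F y := by rw [add_tsub_cancel_of_le hxy]

theorem sum_le_map_sum (hF : StrictDirectionallyConvex F) (hF0 : F 0 = 0) {κ : Type*}
    (s : Finset κ) (g : κ → ι → ℝ≥0) : ∑ j ∈ s, F (g j) ≤ F (∑ j ∈ s, g j) := by
  classical
  induction s using Finset.induction_on with
  | empty => simp [hF0]
  | insert a s ha ih =>
    rw [sum_insert ha, sum_insert ha]
    exact (add_le_add le_rfl ih).trans (hF.le_map_add hF0 _ _)

theorem midpoint_ray (hF : StrictDirectionallyConvex F) (z d : ι → ℝ≥0) (u v : ℝ≥0) :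
    2 * F (z + ((u + v) / 2) • d) ≤ F (z + u • d) + F (z + v • d) := by
  wlog huv : u ≤ v generalizing u v
  · simpa [add_comm u v, add_comm (F (z + u • d))] using this v u (le_of_not_ge huv)
  rcases eq_or_ne d 0 with rfl | hd
  · simp [two_mul]
  rcases huv.eq_or_lt with rfl | huv
  · simp [two_mul]
  have hd' : 0 < d := pos_iff_ne_zero.mpr hd
  have hum : u < (u + v) / 2 := left_lt_add_div_two.mpr huv
  have hmv : (u + v) / 2 < v := add_div_two_lt_right.mpr huv
  have hsum : z + u • d + (z + v • d) = z + ((u + v) / 2) • d + (z + ((u + v) / 2) • d) := by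
    rw [add_add_add_comm, ← add_smul, add_add_add_comm, ← add_smul, add_halves]
  rw [two_mul]
  exact (hF _ _ _ _ (by gcongr) (by gcongr) (by gcongr) (by gcongr) hsum).le

theorem chord_ray (hF : StrictDirectionallyConvex F) (hF0 : F 0 = 0) (z d : ι → ℝ≥0)
    {a s b : ℝ≥0} (has : a ≤ s) (hsb : s ≤ b) :
    ((b : ℝ) - a) * F (z + s • d) ≤
      ((b : ℝ) - s) * F (z + a • d) + ((s : ℝ) - a) * F (z + b • d) := by
  have hray : ∀ t, z + (a + t) • d = z + a • d + t • d := fun t => by rw [add_smul, add_assoc]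
  have key := chord_le_of_monotone_of_midpoint (f := fun t => (F (z + a • d + t • d) : ℝ))
    (fun t₁ t₂ ht => NNReal.coe_le_coe.mpr (hF.monotone hF0 (by gcongr)))
    (fun t₁ t₂ => by exact_mod_cast hF.midpoint_ray (z + a • d) d t₁ t₂)
    (tsub_le_tsub_right hsb a)
  simp only [← hray, add_tsub_cancel_of_le has, add_tsub_cancel_of_le (has.trans hsb), zero_smul,
    add_zero, NNReal.coe_sub has, NNReal.coe_sub (has.trans hsb)] at key
  convert key using 2
  ring

theorem map_add_smul_le (hF : StrictDirectionallyConvex F) (hF0 : F 0 = 0) (z d : ι → ℝ≥0)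
    {δ : ℝ≥0} (hδ : δ ≤ 1) : F (z + δ • d) ≤ F z + δ * F (z + d) := by
  have h := hF.chord_ray hF0 z d zero_le hδ
  simp only [NNReal.coe_zero, NNReal.coe_one, sub_zero, one_mul, zero_smul, add_zero, one_smul] at h
  rw [← NNReal.coe_le_coe]
  push_cast
  nlinarith [(F z).coe_nonneg, NNReal.coe_nonneg δ]

theorem eventually_map_add_smul_lt (hF : StrictDirectionallyConvex F) (hF0 : F 0 = 0)
    (z d : ι → ℝ≥0) {b : ℝ≥0} (h : F z < b) : ∀ᶠ δ in 𝓝 (0 : ℝ≥0), F (z + δ • d) < b := by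
  have hlim : Tendsto (fun δ : ℝ≥0 => F z + δ * F (z + d)) (𝓝 0) (𝓝 (F z)) := by
    simpa using ((tendsto_id (x := 𝓝 (0 : ℝ≥0))).mul_const (F (z + d))).const_add (F z)
  filter_upwards [hlim.eventually_lt_const h, eventually_le_nhds zero_lt_one]
    with δ hδ hδ1
  exact (hF.map_add_smul_le hF0 z d hδ1).trans_lt hδ

variable [DecidableEq ι]

theorem mul_map_add_single_le (hF : StrictDirectionallyConvex F) (hF0 : F 0 = 0)
    (w : ι → ℝ≥0) (a : ι) {t T : ℝ≥0} (htT : t ≤ T) :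
    T * F (w + Pi.single a t) ≤ T * F w + t * F (w + Pi.single a T) := by
  have h := hF.chord_ray hF0 w (Pi.single a 1) zero_le htT
  simp only [NNReal.coe_zero, sub_zero, zero_smul, add_zero, smul_single_one] at h
  rw [← NNReal.coe_le_coe]
  push_cast
  nlinarith [(F w).coe_nonneg, NNReal.coe_nonneg t]

theorem map_add_map_sub_le_max (hF : StrictDirectionallyConvex F) (hF0 : F 0 = 0)
    (y c : ι → ℝ≥0) (a : ι) {t₀ t₁ : ℝ≥0} (h₀ : t₀ ≤ c a) (h₁ : c a ≤ t₁) (hy : t₁ ≤ y a) :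
    F c + F (y - c) ≤ max (F (Function.update c a t₀) + F (y - Function.update c a t₀))
      (F (Function.update c a t₁) + F (y - Function.update c a t₁)) := by
  rcases h₀.eq_or_lt with h | h₀'
  · rw [h, Function.update_eq_self]
    exact le_max_left _ _
  have hsub : ∀ t, y - Function.update c a t = Function.update (y - c) a (y a - t) := by
    intro t
    ext l
    rcases eq_or_ne l a with rfl | hl <;> simp [*]
  have hc := hF.chord_ray hF0 (Function.update c a 0) (Pi.single a 1) h₀ h₁
  have hyc := hF.chord_ray hF0 (Function.update (y - c) a 0) (Pi.single a 1)
    (tsub_le_tsub_left h₁ (y a)) (tsub_le_tsub_left h₀ (y a))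
  simp only [← update_eq_add_smul_single, Function.update_eq_self, ← hsub, NNReal.coe_sub hy,
    NNReal.coe_sub (h₁.trans hy), NNReal.coe_sub ((h₀.trans h₁).trans hy)] at hc hyc
  set M := max (F (Function.update c a t₀) + F (y - Function.update c a t₀))
      (F (Function.update c a t₁) + F (y - Function.update c a t₁))
  have hM₀ : ((F (Function.update c a t₀) + F (y - Function.update c a t₀) : ℝ≥0) : ℝ) ≤ M :=
    NNReal.coe_le_coe.mpr (le_max_left _ _)
  have hM₁ : ((F (Function.update c a t₁) + F (y - Function.update c a t₁) : ℝ≥0) : ℝ) ≤ M :=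
    NNReal.coe_le_coe.mpr (le_max_right _ _)
  push_cast at hM₀ hM₁
  rw [← NNReal.coe_le_coe, ← mul_le_mul_iff_of_pos_left (sub_pos.mpr (NNReal.coe_lt_coe.mpr
    (h₀'.trans_le h₁)))]
  have : ((t₁ : ℝ) - c a) * (F (Function.update c a t₀) + F (y - Function.update c a t₀)) +
      ((c a : ℝ) - t₀) * (F (Function.update c a t₁) + F (y - Function.update c a t₁)) ≤
      ((t₁ : ℝ) - t₀) * M := by
    nlinarith [mul_le_mul_of_nonneg_left hM₀ (sub_nonneg.mpr (NNReal.coe_le_coe.mpr h₁)),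
      mul_le_mul_of_nonneg_left hM₁ (sub_nonneg.mpr (NNReal.coe_le_coe.mpr h₀))]
  push_cast
  linarith

/-- On the box `[δ eₗ₀, y - θ eₗ₁]` the function `c ↦ F c + F (y - c)` is convex in each coordinate,
so it is dominated by its values at the vertices, and every vertex splits `y` into two nonzero
parts. -/
theorem exists_bound_of_far_from_ends [Fintype ι] (hF : StrictDirectionallyConvex F)
    (hF0 : F 0 = 0) {y : ι → ℝ≥0} (hy : 0 < F y) {δ θ : ℝ≥0} (hδ : 0 < δ) (hθ : 0 < θ) :
    ∃ M < F y, ∀ c ≤ y, (∃ l, δ ≤ c l) → (∃ l, θ ≤ (y - c) l) → F c + F (y - c) ≤ M := by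
  classical
  set V := ((univ : Finset (ι × ι)).biUnion fun p =>
    boxVertices (Pi.single p.1 δ) (y - Pi.single p.2 θ)).filter fun v => F v + F (y - v) < F y
  refine ⟨V.sup fun v => F v + F (y - v),
    (Finset.sup_lt_iff hy).mpr fun v hv => (mem_filter.mp hv).2, ?_⟩
  rintro c hcy ⟨l₀, hl₀⟩ ⟨l₁, hl₁⟩
  have hθy : θ + c l₁ ≤ y l₁ := (le_tsub_iff_right (hcy l₁)).mp hl₁
  have hlo : Pi.single l₀ δ ≤ c := fun l => by rcases eq_or_ne l l₀ with rfl | h <;> simp [*]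
  have hhi : c ≤ y - Pi.single l₁ θ := fun l => by
    rcases eq_or_ne l l₁ with rfl | h
    · simpa using le_tsub_of_add_le_left hθy
    · simpa [h] using hcy l
  obtain ⟨v, hv, hcv⟩ := exists_mem_boxVertices_ge (fun c' hlo' hhi' a =>
    hF.map_add_map_sub_le_max hF0 y c' a (hlo' a) (hhi' a) tsub_le_self) hlo hhi
  have hv' : ∀ l, (Pi.single l₀ δ : ι → ℝ≥0) l ≤ v l ∧
      v l ≤ (y - Pi.single l₁ θ : ι → ℝ≥0) l := fun l => by
    have := (hlo l).trans (hhi l)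
    rcases mem_insert.mp (Fintype.mem_piFinset.mp hv l) with h | h
    · exact ⟨h.ge, h.le.trans this⟩
    · rw [mem_singleton.mp h]; exact ⟨this, le_rfl⟩
  have hv0 : v ≠ 0 := fun h => by simpa [h, hδ.ne'] using (hv' l₀).1
  have hθv : θ ≤ (y - v) l₁ := by
    have h : v l₁ ≤ y l₁ - θ := by simpa using (hv' l₁).2
    exact le_tsub_of_add_le_left ((le_tsub_iff_right (le_self_add.trans hθy)).mp h)
  have hyv0 : y - v ≠ 0 := fun h => by
    rw [h, Pi.zero_apply, nonpos_iff_eq_zero] at hθv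
    exact hθ.ne' hθv
  have hvy : v ≤ y := fun l => (hv' l).2.trans tsub_le_self
  have hlt : F v + F (y - v) < F y := by
    simpa [add_tsub_cancel_of_le hvy] using hF.map_add_lt hF0 hv0 hyv0
  exact hcv.trans (le_sup (f := fun v => F v + F (y - v))
    (mem_filter.mpr ⟨mem_biUnion.mpr ⟨(l₀, l₁), mem_univ _, hv⟩, hlt⟩))

end StrictDirectionallyConvex

section Gradient

variable [DecidableEq ι] {F : (ι → ℝ≥0) → ℝ≥0}

noncomputable def gradAtZero (F : (ι → ℝ≥0) → ℝ≥0) (i : ι) : ℝ≥0 :=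
  sInf ((fun t => F (Pi.single i t) / t) '' Set.Ioi 0)

theorem gradAtZero_mul_le (i : ι) (t : ℝ≥0) : gradAtZero F i * t ≤ F (Pi.single i t) := by
  rcases eq_zero_or_pos t with rfl | ht
  · simp
  calc gradAtZero F i * t ≤ F (Pi.single i t) / t * t :=
        mul_le_mul_of_nonneg_right (csInf_le (OrderBot.bddBelow _) ⟨t, ht, rfl⟩) zero_le
    _ = F (Pi.single i t) := div_mul_cancel₀ _ ht.ne'

theorem exists_map_single_lt {i : ι} {g : ℝ≥0} (hg : gradAtZero F i < g) :
    ∃ T, 0 < T ∧ F (Pi.single i T) < T * g := by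
  obtain ⟨_, ⟨T, hT, rfl⟩, hTg⟩ :=
    exists_lt_of_csInf_lt ((Set.nonempty_Ioi (a := (0 : ℝ≥0))).image _) hg
  exact ⟨T, hT, by rwa [div_lt_iff₀' hT] at hTg⟩

namespace StrictDirectionallyConvex

theorem mul_map_single_le (hF : StrictDirectionallyConvex F) (hF0 : F 0 = 0) (i : ι)
    {s t : ℝ≥0} (hst : s ≤ t) : t * F (Pi.single i s) ≤ s * F (Pi.single i t) := by
  have h := hF.chord_ray hF0 0 (Pi.single i 1) zero_le hst
  simp only [NNReal.coe_zero, sub_zero, zero_smul, add_zero, zero_add, smul_single_one, hF0,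
    mul_zero] at h
  exact_mod_cast h

theorem monotoneOn_slope (hF : StrictDirectionallyConvex F) (hF0 : F 0 = 0) (i : ι) :
    MonotoneOn (fun t => F (Pi.single i t) / t) (Set.Ioi 0) := fun s hs t ht hst => by
  simp only
  rw [div_le_div_iff₀ hs ht, mul_comm, mul_comm _ s]
  exact hF.mul_map_single_le hF0 i hst

theorem tendsto_slope (hF : StrictDirectionallyConvex F) (hF0 : F 0 = 0) (i : ι) :
    Tendsto (fun t => F (Pi.single i t) / t) (𝓝[>] 0) (𝓝 (gradAtZero F i)) :=
  (hF.monotoneOn_slope hF0 i).tendsto_nhdsGT (OrderBot.bddBelow _)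

theorem eventually_map_single_le (hF : StrictDirectionallyConvex F) (hF0 : F 0 = 0) (i : ι)
    {g : ℝ≥0} (hg : gradAtZero F i < g) : ∀ᶠ t in 𝓝 (0 : ℝ≥0), F (Pi.single i t) ≤ t * g := by
  obtain ⟨T, hT, hTg⟩ := exists_map_single_lt hg
  filter_upwards [eventually_le_nhds hT] with t htT
  refine le_of_mul_le_mul_left ?_ hT
  calc T * F (Pi.single i t) ≤ t * F (Pi.single i T) := hF.mul_map_single_le hF0 i htT
    _ ≤ t * (T * g) := by gcongr
    _ = T * (t * g) := by ring

theorem gradAtZero_mul_lt (hF : StrictDirectionallyConvex F) (hF0 : F 0 = 0) (i : ι)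
    {t : ℝ≥0} (ht : t ≠ 0) : gradAtZero F i * t < F (Pi.single i t) := by
  have hhalf : Pi.single i (t / 2) ≠ (0 : ι → ℝ≥0) := by simpa using ht
  calc gradAtZero F i * t = gradAtZero F i * (t / 2) + gradAtZero F i * (t / 2) := by
        rw [← mul_add, add_halves]
    _ ≤ F (Pi.single i (t / 2)) + F (Pi.single i (t / 2)) :=
        add_le_add (gradAtZero_mul_le i _) (gradAtZero_mul_le i _)
    _ < F (Pi.single i (t / 2) + Pi.single i (t / 2)) := hF.map_add_lt hF0 hhalf hhalf
    _ = F (Pi.single i t) := by rw [← Pi.single_add, add_halves]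

variable [Fintype ι]

theorem sum_gradAtZero_mul_lt (hF : StrictDirectionallyConvex F) (hF0 : F 0 = 0)
    {y : ι → ℝ≥0} (hy : y ≠ 0) : ∑ i, gradAtZero F i * y i < F y := by
  obtain ⟨i, hi⟩ := Function.ne_iff.mp hy
  calc ∑ i, gradAtZero F i * y i < ∑ i, F (Pi.single i (y i)) :=
        sum_lt_sum (fun i _ => gradAtZero_mul_le i _) ⟨i, mem_univ i, hF.gradAtZero_mul_lt hF0 i hi⟩
    _ ≤ F (∑ i, Pi.single i (y i)) := hF.sum_le_map_sum hF0 _ _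
    _ = F y := by rw [univ_sum_single]

theorem sum_gradAtZero_mul_le (hF : StrictDirectionallyConvex F) (hF0 : F 0 = 0)
    (y : ι → ℝ≥0) : ∑ i, gradAtZero F i * y i ≤ F y := by
  rcases eq_or_ne y 0 with rfl | hy
  · simp [hF0]
  exact (hF.sum_gradAtZero_mul_lt hF0 hy).le

theorem eventually_map_le_sum_mul (hF : StrictDirectionallyConvex F) (hF0 : F 0 = 0)
    {g : ι → ℝ≥0} (hg : ∀ l, gradAtZero F l < g l) :
    ∀ᶠ δ in 𝓝 (0 : ℝ≥0), ∀ c : ι → ℝ≥0, (∀ l, c l ≤ δ) → F c ≤ ∑ l, c l * g l := by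
  choose T hT hTg using fun l => exists_map_single_lt (hg l)
  have hδ : ∀ l, ∀ᶠ δ in 𝓝 (0 : ℝ≥0),
      δ ≤ T l ∧ F (Pi.single l (T l) + δ • 1) < T l * g l := fun l =>
    (eventually_le_nhds (hT l)).and (hF.eventually_map_add_smul_lt hF0 _ 1 (hTg l))
  filter_upwards [eventually_all.mpr hδ] with δ hδ c hc
  suffices ∀ s : Finset ι, F (∑ l ∈ s, Pi.single l (c l)) ≤ ∑ l ∈ s, c l * g l by
    simpa [univ_sum_single] using this univ
  intro s
  induction s using Finset.induction_on with
  | empty => simp [hF0]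
  | insert a s ha ih =>
    set w := ∑ l ∈ s, Pi.single l (c l)
    have hwc : w ≤ c := (sum_le_sum_of_subset (subset_univ s)).trans_eq (univ_sum_single c)
    have hw : w + Pi.single a (T a) ≤ Pi.single a (T a) + δ • 1 := by
      rw [add_comm]
      gcongr
      intro l
      simpa using (hwc l).trans (hc l)
    rw [sum_insert ha, sum_insert ha, add_comm (Pi.single a (c a)) w]
    refine le_of_mul_le_mul_left ?_ (hT a)
    calc T a * F (w + Pi.single a (c a))
        ≤ T a * F w + c a * F (w + Pi.single a (T a)) :=
          hF.mul_map_add_single_le hF0 w a ((hc a).trans (hδ a).1)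
      _ ≤ T a * ∑ l ∈ s, c l * g l + c a * (T a * g a) := by
          gcongr
          exact (hF.monotone hF0 hw).trans (hδ a).2.le
      _ = T a * (c a * g a + ∑ l ∈ s, c l * g l) := by ring

end StrictDirectionallyConvex

end Gradient

section Transforms

variable {A F : (ι → ℝ≥0) → ℝ≥0}

/-- `A* x` is the supremum of `packingSums A x`, and `A_* x` the infimum of `coveringSums A x`. -/
def packingSums (A : (ι → ℝ≥0) → ℝ≥0) (x : ι → ℝ≥0) : Set ℝ≥0 :=
  {s | ∃ (k : ℕ) (c : Fin k → (ι → ℝ≥0)), 1 ≤ k ∧ (∑ j, c j) ≤ x ∧ s = ∑ j, A (c j)}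

def coveringSums (A : (ι → ℝ≥0) → ℝ≥0) (x : ι → ℝ≥0) : Set ℝ≥0 :=
  {s | ∃ (k : ℕ) (d : Fin k → (ι → ℝ≥0)), 1 ≤ k ∧ x ≤ (∑ i, d i) ∧ s = ∑ i, A (d i)}

theorem exists_fin_family (hA0 : A 0 = 0) {κ : Type*} [Fintype κ] (c : κ → ι → ℝ≥0) :
    ∃ (k : ℕ) (c' : Fin k → ι → ℝ≥0), 1 ≤ k ∧ ∑ j, c' j = ∑ j, c j ∧
      ∑ j, A (c' j) = ∑ j, A (c j) := by
  -- the extra zero piece `none` keeps `k ≥ 1` when `κ` is empty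
  let e := Fintype.equivFin (Option κ)
  refine ⟨Fintype.card (Option κ), fun j => (e.symm j).elim 0 c, by simp, ?_, ?_⟩
  · exact (e.symm.sum_comp fun o => o.elim 0 c).trans (by simp [Fintype.sum_option])
  · exact (e.symm.sum_comp fun o => A (o.elim 0 c)).trans (by simp [Fintype.sum_option, hA0])

theorem sum_mem_packingSums (hA0 : A 0 = 0) {κ : Type*} [Fintype κ] {c : κ → ι → ℝ≥0}
    {x : ι → ℝ≥0} (hc : ∑ j, c j ≤ x) : ∑ j, A (c j) ∈ packingSums A x := by
  obtain ⟨k, c', hk, hsum, hA⟩ := exists_fin_family hA0 c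
  exact ⟨k, c', hk, hsum ▸ hc, hA.symm⟩

theorem sum_mem_coveringSums (hA0 : A 0 = 0) {κ : Type*} [Fintype κ] {d : κ → ι → ℝ≥0}
    {x : ι → ℝ≥0} (hd : x ≤ ∑ j, d j) : ∑ j, A (d j) ∈ coveringSums A x := by
  obtain ⟨k, d', hk, hsum, hA⟩ := exists_fin_family hA0 d
  exact ⟨k, d', hk, hsum ▸ hd, hA.symm⟩

theorem map_zero_of_isLUB (hA0 : A 0 = 0) (hstar : ∀ x, IsLUB (packingSums A x) (F x)) :
    F 0 = 0 := by
  refine le_antisymm ((hstar 0).2 ?_) zero_le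
  rintro s ⟨k, c, -, hc, rfl⟩
  have : ∀ j, c j = 0 := fun j =>
    le_zero_iff.mp ((single_le_sum (fun j _ => zero_le) (mem_univ j)).trans hc)
  simp [this, hA0]

theorem sum_le_of_isLUB (hA0 : A 0 = 0) (hstar : ∀ x, IsLUB (packingSums A x) (F x))
    {κ : Type*} [Fintype κ] {c : κ → ι → ℝ≥0} {x : ι → ℝ≥0} (hc : ∑ j, c j ≤ x) :
    ∑ j, A (c j) ≤ F x :=
  (hstar x).1 (sum_mem_packingSums hA0 hc)

theorem le_of_isLUB (hA0 : A 0 = 0) (hstar : ∀ x, IsLUB (packingSums A x) (F x))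
    (x : ι → ℝ≥0) : A x ≤ F x := by
  simpa using sum_le_of_isLUB hA0 hstar (c := fun _ : Unit => x) (by simp)

theorem sum_le_add_of_isLUB (hA0 : A 0 = 0) (hstar : ∀ x, IsLUB (packingSums A x) (F x))
    {κ : Type*} [Fintype κ] [DecidableEq κ] {c : κ → ι → ℝ≥0} {y : ι → ℝ≥0}
    (hc : ∑ j, c j ≤ y) (j₀ : κ) : ∑ j, A (c j) ≤ A (c j₀) + F (y - c j₀) := by
  rw [Fintype.sum_eq_add_sum_subtype_ne _ j₀] at hc ⊢
  exact add_le_add le_rfl (sum_le_of_isLUB hA0 hstar (le_tsub_of_add_le_left hc))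

variable [Fintype ι]

theorem sum_le_sum_mul_of_pieces_le (hA0 : A 0 = 0) (hstar : ∀ x, IsLUB (packingSums A x) (F x))
    {δ : ℝ≥0} {g : ι → ℝ≥0}
    (hF : ∀ c : ι → ℝ≥0, (∀ l, c l ≤ δ) → F c ≤ ∑ l, c l * g l)
    {κ : Type*} [Fintype κ] {c : κ → ι → ℝ≥0} {y : ι → ℝ≥0} (hc : ∑ j, c j ≤ y)
    (hδ : ∀ j l, c j l ≤ δ) : ∑ j, A (c j) ≤ ∑ l, y l * g l :=
  calc ∑ j, A (c j) ≤ ∑ j, ∑ l, c j l * g l :=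
        sum_le_sum fun j _ => (le_of_isLUB hA0 hstar _).trans (hF _ (hδ j))
    _ = ∑ l, (∑ j, c j) l * g l := by simp only [Finset.sum_apply, sum_mul]; exact sum_comm
    _ ≤ ∑ l, y l * g l := by gcongr with l; exact hc l

variable [DecidableEq ι]

theorem exists_lt_mem_upperBounds_packingSums (hA0 : A 0 = 0) (hA : Monotone A)
    (hstar : ∀ x, IsLUB (packingSums A x) (F x)) (hF : StrictDirectionallyConvex F)
    {y : ι → ℝ≥0} (hAy : A y < F y) : ∃ M < F y, M ∈ upperBounds (packingSums A y) := by
  have hF0 := map_zero_of_isLUB hA0 hstar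
  have hy : y ≠ 0 := by rintro rfl; simp [hA0, hF0] at hAy
  have hgrad : ∀ᶠ ε in 𝓝 (0 : ℝ≥0), ∑ l, y l * (gradAtZero F l + ε) < F y := by
    have hcont : Continuous fun ε : ℝ≥0 => ∑ l, y l * (gradAtZero F l + ε) := by fun_prop
    refine (hcont.tendsto 0).eventually_lt_const ?_
    simpa [mul_comm] using hF.sum_gradAtZero_mul_lt hF0 hy
  obtain ⟨ε, hε, hεy⟩ := exists_pos_of_eventually_nhds_zero hgrad
  obtain ⟨η, hη, hsmall, htop⟩ := exists_pos_of_eventually_nhds_zero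
    ((hF.eventually_map_le_sum_mul hF0 fun l => lt_add_of_pos_right (gradAtZero F l) hε).and
      (hF.eventually_map_add_smul_lt hF0 0 1 (hF0 ▸ tsub_pos_of_lt hAy)))
  rw [zero_add, lt_tsub_iff_left] at htop
  obtain ⟨M, hM, hbox⟩ := hF.exists_bound_of_far_from_ends hF0 (pos_of_gt hAy) hη hη
  refine ⟨max (∑ l, y l * (gradAtZero F l + ε)) (max (A y + F (η • 1)) M),
    max_lt hεy (max_lt htop hM), ?_⟩
  rintro s ⟨k, c, -, hc, rfl⟩
  by_cases hpieces : ∀ j l, c j l ≤ η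
  · exact le_max_of_le_left (sum_le_sum_mul_of_pieces_le hA0 hstar hsmall hc hpieces)
  push Not at hpieces
  obtain ⟨j₀, l₀, hl₀⟩ := hpieces
  have hcy : c j₀ ≤ y := (single_le_sum (fun j _ => zero_le) (mem_univ j₀)).trans hc
  refine le_max_of_le_right ((sum_le_add_of_isLUB hA0 hstar hc j₀).trans ?_)
  by_cases hrest : ∀ l, (y - c j₀) l ≤ η
  · refine le_max_of_le_left (add_le_add (hA hcy) (hF.monotone hF0 fun l => ?_))
    simpa using hrest l
  push Not at hrest
  obtain ⟨l₁, hl₁⟩ := hrest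
  exact le_max_of_le_right ((add_le_add (le_of_isLUB hA0 hstar _) le_rfl).trans
    (hbox (c j₀) hcy ⟨l₀, hl₀.le⟩ ⟨l₁, hl₁.le⟩))

theorem eq_of_isLUB_packingSums (hA0 : A 0 = 0) (hA : Monotone A)
    (hstar : ∀ x, IsLUB (packingSums A x) (F x)) (hF : StrictDirectionallyConvex F) : A = F := by
  funext y
  refine (le_of_isLUB hA0 hstar y).antisymm (not_lt.mp fun hAy => ?_)
  obtain ⟨M, hM, hbound⟩ := exists_lt_mem_upperBounds_packingSums hA0 hA hstar hF hAy
  exact ((hstar y).2 hbound).not_gt hM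

theorem StrictDirectionallyConvex.sum_gradAtZero_mul_le_of_mem_coveringSums
    (hF : StrictDirectionallyConvex F) (hF0 : F 0 = 0) {x : ι → ℝ≥0} {s : ℝ≥0}
    (hs : s ∈ coveringSums F x) :
    ∑ i, gradAtZero F i * x i ≤ s := by
  obtain ⟨k, d, -, hd, rfl⟩ := hs
  calc ∑ i, gradAtZero F i * x i ≤ ∑ i, gradAtZero F i * (∑ j, d j) i := by
        gcongr with i; exact hd i
    _ = ∑ j, ∑ i, gradAtZero F i * d j i := by
        simp only [Finset.sum_apply, mul_sum]; exact sum_comm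
    _ ≤ ∑ j, F (d j) := sum_le_sum fun j _ => hF.sum_gradAtZero_mul_le hF0 (d j)

theorem exists_mem_coveringSums_le (hA0 : A 0 = 0) {g : ι → ℝ≥0}
    (hg : ∀ i, ∀ᶠ t in 𝓝 (0 : ℝ≥0), A (Pi.single i t) ≤ t * g i) (x : ι → ℝ≥0) :
    ∃ s ∈ coveringSums A x, s ≤ ∑ i, g i * x i := by
  have hN : ∀ᶠ N : ℕ in atTop, ∀ i, A (Pi.single i (x i / N)) ≤ x i / N * g i :=
    eventually_all.mpr fun i => (tendsto_const_div_atTop_nhds_zero_nat (x i)).eventually (hg i)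
  obtain ⟨N, hN, hN1⟩ := (hN.and (eventually_ge_atTop 1)).exists
  have hN0 : (N : ℝ≥0) ≠ 0 := Nat.cast_ne_zero.mpr (by omega)
  refine ⟨∑ p : ι × Fin N, A (Pi.single p.1 (x p.1 / N)),
    sum_mem_coveringSums hA0 (le_of_eq ?_), ?_⟩
  · rw [Fintype.sum_prod_type]
    simp only [sum_const, card_univ, Fintype.card_fin, ← Pi.single_smul, nsmul_eq_mul,
      mul_div_cancel₀ _ hN0, univ_sum_single]
  · rw [Fintype.sum_prod_type]
    simp only [sum_const, card_univ, Fintype.card_fin, nsmul_eq_mul]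
    refine sum_le_sum fun i _ => ?_
    calc (N : ℝ≥0) * A (Pi.single i (x i / N)) ≤ N * (x i / N * g i) := by gcongr; exact hN i
      _ = g i * x i := by rw [← mul_assoc, mul_div_cancel₀ _ hN0, mul_comm]

theorem StrictDirectionallyConvex.isGLB_coveringSums (hF : StrictDirectionallyConvex F)
    (hF0 : F 0 = 0) (x : ι → ℝ≥0) : IsGLB (coveringSums F x) (∑ i, gradAtZero F i * x i) := by
  refine ⟨fun s hs => hF.sum_gradAtZero_mul_le_of_mem_coveringSums hF0 hs, fun b hb => ?_⟩
  have hcont : Continuous fun ε : ℝ≥0 => ∑ i, (gradAtZero F i + ε) * x i := by fun_prop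
  have hlim : Tendsto (fun ε => ∑ i, (gradAtZero F i + ε) * x i) (𝓝[>] 0)
      (𝓝 (∑ i, gradAtZero F i * x i)) := by
    simpa using (hcont.tendsto 0).mono_left nhdsWithin_le_nhds
  refine ge_of_tendsto hlim ?_
  filter_upwards [self_mem_nhdsWithin] with ε hε
  obtain ⟨s, hs, hsx⟩ := exists_mem_coveringSums_le hF0
    (fun i => hF.eventually_map_single_le hF0 i (lt_add_of_pos_right _ hε)) x
  exact (hb hs).trans hsx

end Transforms

end AggregationFunction

/-- If `A : [0,∞)^n → [0,∞)` is an aggregation function whose super-additive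
transformation `A*` is finite and strictly directionally convex, then
`A_*(x) = ∇·x` where `∇ᵢ = lim_{t→0⁺} A(t·eᵢ)/t`. -/
theorem subTransform_linear_of_strictDirectionallyConvex
    (n : ℕ) (A Astar : (Fin n → ℝ≥0) → ℝ≥0)
    (hA0 : A 0 = 0) (hmono : Monotone A)
    (hstar : ∀ x : Fin n → ℝ≥0,
      IsLUB {s : ℝ≥0 | ∃ (k : ℕ) (c : Fin k → (Fin n → ℝ≥0)), 1 ≤ k ∧
        (∑ j, c j) ≤ x ∧ s = ∑ j, A (c j)} (Astar x))
    (hconv : ∀ u v x y : Fin n → ℝ≥0, u < x → u < y → x < v → y < v → u + v = x + y →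
      Astar x + Astar y < Astar u + Astar v) :
    ∃ grad : Fin n → ℝ≥0,
      (∀ i : Fin n, Filter.Tendsto (fun t : ℝ≥0 => A (Pi.single i t) / t)
        (nhdsWithin 0 (Set.Ioi 0)) (nhds (grad i))) ∧
      ∀ x : Fin n → ℝ≥0,
        IsGLB {s : ℝ≥0 | ∃ (k : ℕ) (d : Fin k → (Fin n → ℝ≥0)), 1 ≤ k ∧
          x ≤ (∑ i, d i) ∧ s = ∑ i, A (d i)} (∑ i, grad i * x i) := by
  obtain rfl : A = Astar := AggregationFunction.eq_of_isLUB_packingSums hA0 hmono hstar hconv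
  exact ⟨AggregationFunction.gradAtZero A,
    AggregationFunction.StrictDirectionallyConvex.tendsto_slope hconv hA0,
    AggregationFunction.StrictDirectionallyConvex.isGLB_coveringSums hconv hA0⟩
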